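/- arXiv:1011.4069 — 3 statements merged into one kernel-verified Lean document; each statement's English description precedes it below -/
import Mathlib

section
/- Let $N>1$, $1<p<\infty$, $p\ne N$, $\rho>0$. For $r\in[0,\rho]$ define $F(r)=\left(\int_r^\rho\theta^{\frac{1-N}{p-1}}d\theta\right)\left(\int_0^r s^{N-1}ds\right)^{\frac{1}{p-1}}$. Then $\left(\max_{0\le r\le\rho}F(r)\right)^{-(p-1)}=\frac{N^p}{(p-1)^{p-1}}\left(\frac{p}{N}\right)^{\frac{p(p-1)}{p-N}}\cdot\frac{1}{\rho^p}$. -/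
open Real Set

/-! On `[0, ρ]` both integrals are explicit: with `a = N/(p-1)`, `q = p/(p-1)` and
`x = r/ρ` one gets `F r = N^(-1/(p-1)) ρ^q (x^a - x^q)/(q-a)`. The maximiser of
`(x^a - x^q)/(q-a)` on `x ≥ 0` is the point `x₀ ∈ (0, 1]` with `x₀^(q-a) = a/q`; substituting
`x = x₀ u` turns the bound into Bernoulli's inequality `q u^a - a u^q ≤ q - a` for `a ≤ q`
(with the roles of `a` and `q` exchanged when `q < a`). The maximum value `x₀^a/q` gives the
constant after raising to `-(p-1)`, an identity that is checked on logarithms. -/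

theorem mul_rpow_le_mul_rpow_add_sub {a q u : ℝ} (ha : 0 < a) (haq : a ≤ q) (hu : 0 ≤ u) :
    q * u ^ a ≤ a * u ^ q + (q - a) := by
  have h := one_add_mul_self_le_rpow_one_add (s := u ^ a - 1)
    (by linarith [rpow_nonneg hu a]) ((one_le_div ha).2 haq)
  rw [add_sub_cancel, ← rpow_mul hu, mul_div_cancel₀ _ ha.ne'] at h
  have := mul_le_mul_of_nonneg_left h ha.le
  rw [mul_add, mul_one, ← mul_assoc, mul_div_cancel₀ _ ha.ne'] at this
  linarith

theorem mul_rpow_sub_mul_rpow_div_le_one {a q u : ℝ} (ha : 0 < a) (hq : 0 < q) (haq : a ≠ q)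
    (hu : 0 ≤ u) : (q * u ^ a - a * u ^ q) / (q - a) ≤ 1 := by
  rcases haq.lt_or_gt with h | h
  · rw [div_le_one (sub_pos.2 h)]
    linarith [mul_rpow_le_mul_rpow_add_sub ha h.le hu]
  · rw [div_le_one_of_neg (sub_neg.2 h)]
    linarith [mul_rpow_le_mul_rpow_add_sub hq h.le hu]

section Maximiser

variable {a q x₀ : ℝ}

theorem rpow_sub_rpow_div_eq (hq : q ≠ 0) (hx₀ : 0 < x₀) (hx₀q : x₀ ^ (q - a) = a / q)
    {u : ℝ} (hu : 0 ≤ u) :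
    ((x₀ * u) ^ a - (x₀ * u) ^ q) / (q - a) = x₀ ^ a / q * ((q * u ^ a - a * u ^ q) / (q - a)) := by
  rw [mul_rpow hx₀.le hu, mul_rpow hx₀.le hu, ← sub_add_cancel q a, rpow_add hx₀, hx₀q,
    sub_add_cancel]
  field_simp

theorem rpow_sub_rpow_div_le (ha : 0 < a) (hq : 0 < q) (haq : a ≠ q) (hx₀ : 0 < x₀)
    (hx₀q : x₀ ^ (q - a) = a / q) {x : ℝ} (hx : 0 ≤ x) :
    (x ^ a - x ^ q) / (q - a) ≤ x₀ ^ a / q := by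
  have hu : 0 ≤ x / x₀ := div_nonneg hx hx₀.le
  have h := rpow_sub_rpow_div_eq hq.ne' hx₀ hx₀q hu
  rw [mul_div_cancel₀ _ hx₀.ne'] at h
  rw [h]
  exact mul_le_of_le_one_right (by positivity) (mul_rpow_sub_mul_rpow_div_le_one ha hq haq hu)

theorem rpow_sub_rpow_div_self (hq : q ≠ 0) (haq : a ≠ q) (hx₀ : 0 < x₀)
    (hx₀q : x₀ ^ (q - a) = a / q) : (x₀ ^ a - x₀ ^ q) / (q - a) = x₀ ^ a / q := by
  simpa only [mul_one, one_rpow, div_self (sub_ne_zero.2 haq.symm)] using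
    rpow_sub_rpow_div_eq hq hx₀ hx₀q zero_le_one

theorem le_one_of_rpow_sub_eq_div (hq : 0 < q) (haq : a ≠ q) (hx₀q : x₀ ^ (q - a) = a / q) :
    x₀ ≤ 1 := by
  by_contra! h
  rcases haq.lt_or_gt with hlt | hgt
  · have := one_lt_rpow h (sub_pos.2 hlt)
    rw [hx₀q, one_lt_div hq] at this
    linarith
  · have := rpow_lt_one_of_one_lt_of_neg h (sub_neg.2 hgt)
    rw [hx₀q, div_lt_one hq] at this
    linarith

end Maximiser

theorem integral_rpow_sub_one_mul_rpow {a q r ρ : ℝ} (haq : a ≠ q) (hr : 0 < r) (hρ : 0 < ρ) :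
    (∫ θ in r..ρ, θ ^ (q - a - 1)) * r ^ a = ρ ^ q * (((r / ρ) ^ a - (r / ρ) ^ q) / (q - a)) := by
  have hqa : q - a ≠ 0 := sub_ne_zero.2 haq.symm
  rw [integral_rpow (Or.inr ⟨by contrapose! hqa; linarith, notMem_uIcc_of_lt hr hρ⟩),
    sub_add_cancel, div_rpow hr.le hρ.le, div_rpow hr.le hρ.le]
  have hsplit : ∀ x : ℝ, 0 < x → x ^ q = x ^ (q - a) * x ^ a := fun x hx => by
    rw [← rpow_add hx, sub_add_cancel]
  rw [hsplit r hr, hsplit ρ hρ]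
  have hρa := rpow_pos_of_pos hρ a
  field_simp

theorem integral_zero_rpow_sub_one_rpow {n e r : ℝ} (hn : 0 < n) (hr : 0 ≤ r) :
    (∫ s in (0 : ℝ)..r, s ^ (n - 1)) ^ e = n ^ (-e) * r ^ (n * e) := by
  rw [integral_rpow (Or.inl (by linarith)), sub_add_cancel, zero_rpow hn.ne', sub_zero,
    div_rpow (rpow_nonneg hr n) hn.le, ← rpow_mul hr, rpow_neg hn.le]
  ring

theorem integral_rpow_mul_integral_rpow_rpow {n p r ρ : ℝ} (hn : 0 < n) (hp : 1 < p)
    (hpn : p ≠ n) (hr : 0 ≤ r) (hρ : 0 < ρ) :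
    (∫ θ in r..ρ, θ ^ ((1 - n) / (p - 1))) * (∫ s in (0 : ℝ)..r, s ^ (n - 1)) ^ (1 / (p - 1)) =
      n ^ (-(1 / (p - 1))) * ρ ^ (p / (p - 1)) *
        (((r / ρ) ^ (n / (p - 1)) - (r / ρ) ^ (p / (p - 1))) / (p / (p - 1) - n / (p - 1))) := by
  have hp1 : p - 1 ≠ 0 := by linarith
  rcases hr.eq_or_lt with rfl | hr
  · rw [intervalIntegral.integral_same, zero_div, zero_rpow (by positivity),
      zero_rpow (by positivity), zero_rpow (by positivity)]
    simp
  · have hexp : (1 - n) / (p - 1) = p / (p - 1) - n / (p - 1) - 1 := by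
      field_simp
      ring
    rw [integral_zero_rpow_sub_one_rpow hn hr.le, mul_one_div, mul_left_comm, hexp,
      integral_rpow_sub_one_mul_rpow (fun h => hpn ((div_left_inj' hp1).1 h).symm) hr hρ]
    ring

theorem maxValue_rpow_neg_sub_one_eq {n p ρ : ℝ} (hn : 0 < n) (hp : 1 < p) (hρ : 0 < ρ) (hpn : p ≠ n) :
    (n ^ (-(1 / (p - 1))) * ρ ^ (p / (p - 1)) *
      (((n / p) ^ ((p - 1) / (p - n))) ^ (n / (p - 1)) / (p / (p - 1)))) ^ (-(p - 1)) =
      n ^ p / (p - 1) ^ (p - 1) * (p / n) ^ (p * (p - 1) / (p - n)) * (1 / ρ ^ p) := by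
  have hp0 : 0 < p := by linarith
  have hp1 : 0 < p - 1 := by linarith
  have hpn' : p - n ≠ 0 := sub_ne_zero.2 hpn
  apply log_injOn_pos (by simp only [mem_Ioi]; positivity) (by simp only [mem_Ioi]; positivity)
  simp (disch := positivity) only [log_rpow, log_mul, log_div, log_one]
  field_simp
  ring

theorem stmt_4 (N : ℕ) (hN : 1 < N) (p ρ : ℝ) (hp : 1 < p) (hpN : p ≠ (N : ℝ)) (hρ : 0 < ρ)
    (F : ℝ → ℝ)
    (hF : ∀ r : ℝ, F r =
      (∫ θ in r..ρ, θ ^ ((1 - (N : ℝ)) / (p - 1))) *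
        (∫ s in (0 : ℝ)..r, s ^ ((N : ℝ) - 1)) ^ (1 / (p - 1))) :
    (⨆ r : Set.Icc (0 : ℝ) ρ, F r) ^ (-(p - 1)) =
      (N : ℝ) ^ p / (p - 1) ^ (p - 1) * ((p / N) ^ (p * (p - 1) / (p - N))) * (1 / ρ ^ p) := by
  have hN0 : (0 : ℝ) < N := Nat.cast_pos.2 (zero_lt_one.trans hN)
  have hp1 : 0 < p - 1 := by linarith
  set a := (N : ℝ) / (p - 1)
  set q := p / (p - 1)
  have ha : 0 < a := by positivity
  have hq : 0 < q := div_pos (by linarith) hp1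
  have haq : a ≠ q := fun h => hpN ((div_left_inj' hp1.ne').1 h).symm
  set x₀ := ((N : ℝ) / p) ^ ((p - 1) / (p - N))
  have hx₀ : 0 < x₀ := by positivity
  have hx₀q : x₀ ^ (q - a) = a / q := by
    have hpN' : p - N ≠ 0 := sub_ne_zero.2 hpN
    rw [← rpow_mul (by positivity),
      show (p - 1) / (p - N) * (q - a) = 1 by simp only [q, a]; field_simp, rpow_one]
    simp only [a, q]
    field_simp
  have hx₀1 : x₀ ≤ 1 := le_one_of_rpow_sub_eq_div hq haq hx₀q
  set C := (N : ℝ) ^ (-(1 / (p - 1))) * ρ ^ q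
  have hFC : ∀ r ∈ Icc 0 ρ, F r = C * (((r / ρ) ^ a - (r / ρ) ^ q) / (q - a)) := fun r hr => by
    rw [hF, integral_rpow_mul_integral_rpow_rpow hN0 hp hpN hr.1 hρ]
  have hgreatest : IsGreatest (range fun r : Icc 0 ρ => F r) (C * (x₀ ^ a / q)) := by
    have hmem : ρ * x₀ ∈ Icc 0 ρ := ⟨by positivity, mul_le_of_le_one_right hρ.le hx₀1⟩
    refine ⟨⟨⟨ρ * x₀, hmem⟩, ?_⟩, ?_⟩
    · show F (ρ * x₀) = _
      rw [hFC _ hmem, mul_div_cancel_left₀ _ hρ.ne', rpow_sub_rpow_div_self hq.ne' haq hx₀ hx₀q]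
    · rintro _ ⟨r, rfl⟩
      show F r ≤ _
      rw [hFC r r.2]
      exact mul_le_mul_of_nonneg_left
        (rpow_sub_rpow_div_le ha hq haq hx₀ hx₀q (div_nonneg r.2.1 hρ.le)) (by positivity)
  rw [iSup, hgreatest.csSup_eq]
  exact maxValue_rpow_neg_sub_one_eq hN0 hp hρ hpN
end

section
/- Let $N>1$, $p=N$, $\rho>0$. For $r\in[0,\rho]$ define $F(r)=\left(\int_r^\rho\theta^{-1}d\theta\right)\left(\frac{r^N}{N}\right)^{\frac{1}{N-1}}$. Then $\left(\max_{0\le r\le\rho}F(r)\right)^{-(N-1)}=\frac{N^N}{(N-1)^{N-1}}e^{N-1}\cdot\frac{1}{\rho^N}$. -/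
/-!
With `α = N / (N - 1)`, for `0 < r` one has `F r = N ^ (-1 / (N - 1)) * log (ρ / r) * r ^ α`.
Writing `s = (ρ / r) ^ α`, the product `log (ρ / r) * r ^ α = ρ ^ α * log s / (α * s)` is at most
`ρ ^ α / (α * e)` because `log s ≤ s / e`, with equality at `s = e`, i.e. at `r = ρ * exp (-1 / α)`.
At `r = 0` the integral of `θ⁻¹` over `[0, ρ]` is a junk value, but it is multiplied by `0`.
-/

open Real Set

lemma log_le_div_exp {x : ℝ} (hx : 0 < x) : log x ≤ x / exp 1 := by
  have h := log_le_sub_one_of_pos (div_pos hx (exp_pos 1))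
  rw [log_div hx.ne' (exp_pos 1).ne', log_exp] at h
  linarith

section LogTimesPower

variable {α ρ : ℝ}

lemma log_div_mul_rpow_le (hα : 0 < α) (hρ : 0 < ρ) {r : ℝ} (hr : 0 < r) :
    log (ρ / r) * r ^ α ≤ ρ ^ α / (α * exp 1) := by
  have hs : 0 < (ρ / r) ^ α := rpow_pos_of_pos (div_pos hρ hr) α
  have hlog : α * log (ρ / r) ≤ (ρ / r) ^ α / exp 1 := by
    simpa only [log_rpow (div_pos hρ hr)] using log_le_div_exp hs
  have hprod : (ρ / r) ^ α * r ^ α = ρ ^ α := by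
    rw [← mul_rpow (div_pos hρ hr).le hr.le, div_mul_cancel₀ ρ hr.ne']
  rw [← hprod, le_div_iff₀ (by positivity)]
  calc log (ρ / r) * r ^ α * (α * exp 1) = α * log (ρ / r) * r ^ α * exp 1 := by ring
    _ ≤ (ρ / r) ^ α / exp 1 * r ^ α * exp 1 := by gcongr
    _ = (ρ / r) ^ α * r ^ α := by field_simp

lemma log_div_mul_rpow_at_exp_neg_inv (hα : 0 < α) (hρ : 0 < ρ) :
    log (ρ / (ρ * exp (-α⁻¹))) * (ρ * exp (-α⁻¹)) ^ α = ρ ^ α / (α * exp 1) := by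
  have hexp : -α⁻¹ * α = -1 := by field_simp
  rw [div_mul_cancel_left₀ hρ.ne', log_inv, log_exp, mul_rpow hρ.le (exp_pos _).le, ← exp_mul,
    hexp, exp_neg]
  field_simp

lemma isMaxOn_log_div_mul_rpow (hα : 0 < α) (hρ : 0 < ρ) :
    IsMaxOn (fun r ↦ log (ρ / r) * r ^ α) (Ici 0) (ρ * exp (-α⁻¹)) := by
  refine isMaxOn_iff.2 fun r (hr : 0 ≤ r) ↦ ?_
  rw [log_div_mul_rpow_at_exp_neg_inv hα hρ]
  rcases hr.eq_or_lt with rfl | hr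
  · rw [zero_rpow hα.ne', mul_zero]
    positivity
  · exact log_div_mul_rpow_le hα hρ hr

end LogTimesPower

lemma integral_inv_mul_div_rpow {ρ r p β : ℝ} (hρ : 0 < ρ) (hr : 0 ≤ r) (hp : 0 < p)
    (hβ : 0 < β) :
    (∫ θ in r..ρ, θ⁻¹) * (r ^ p / p) ^ β = log (ρ / r) * r ^ (p * β) / p ^ β := by
  rcases hr.eq_or_lt with rfl | hr
  · simp [zero_rpow hp.ne', zero_rpow hβ.ne', zero_rpow (mul_pos hp hβ).ne']
  · rw [integral_inv_of_pos hr hρ, div_rpow (rpow_nonneg hr.le p) hp.le, ← rpow_mul hr.le,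
      mul_div_assoc]

theorem stmt_5 (N : ℕ) (hN : 1 < N) (ρ : ℝ) (hρ : 0 < ρ)
    (F : ℝ → ℝ)
    (hF : ∀ r : ℝ, F r =
      (∫ θ in r..ρ, θ⁻¹) * (r ^ (N : ℝ) / N) ^ (1 / ((N : ℝ) - 1))) :
    (⨆ r : Set.Icc (0 : ℝ) ρ, F r) ^ (-((N : ℝ) - 1)) =
      (N : ℝ) ^ (N : ℝ) / ((N : ℝ) - 1) ^ ((N : ℝ) - 1) * Real.exp 1 ^ ((N : ℝ) - 1)
        * (1 / ρ ^ (N : ℝ)) := by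
  set n : ℝ := (N : ℝ)
  have hn1 : 0 < n - 1 := by simp only [n, sub_pos, Nat.one_lt_cast, hN]
  have hn0 : 0 < n := by linarith
  have hα : 0 < n * (1 / (n - 1)) := by positivity
  have hFr (r : ℝ) (hr : 0 ≤ r) :
      F r = log (ρ / r) * r ^ (n * (1 / (n - 1))) / n ^ (1 / (n - 1)) :=
    (hF r).trans (integral_inv_mul_div_rpow hρ hr hn0 (by positivity))
  set r₀ := ρ * exp (-(n * (1 / (n - 1)))⁻¹)
  have hr₀ : r₀ ∈ Icc 0 ρ :=
    ⟨by positivity, mul_le_of_le_one_right hρ.le (exp_le_one_iff.2 (neg_nonpos.2 (inv_pos.2 hα).le))⟩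
  have hmax : IsMaxOn F (Icc 0 ρ) r₀ := isMaxOn_iff.2 fun r hr ↦ by
    rw [hFr r hr.1, hFr r₀ hr₀.1]
    gcongr ?_ / _
    exact isMaxOn_iff.1 (isMaxOn_log_div_mul_rpow hα hρ) r hr.1
  rw [hmax.iSup_eq hr₀, hFr r₀ hr₀.1, log_div_mul_rpow_at_exp_neg_inv hα hρ,
    rpow_neg (by positivity), div_rpow (by positivity) (by positivity), div_rpow (by positivity) (by positivity),
    mul_rpow (by positivity) (by positivity), ← rpow_mul hρ.le, ← rpow_mul hn0.le,
    mul_rpow hn0.le (by positivity), div_rpow zero_le_one hn1.le]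
  have hρ_exp : n * (1 / (n - 1)) * (n - 1) = n := by field_simp
  have hn_exp : 1 / (n - 1) * (n - 1) = 1 := by field_simp
  have hn_pow : n ^ (n - 1) * n = n ^ n := by rw [← rpow_add_one hn0.ne']; ring_nf
  rw [hρ_exp, hn_exp, one_rpow, rpow_one]
  field_simp
  linear_combination hn_pow
end

section
/- Let $N>1$, $1<p<\infty$, $\rho>0$, and let $\omega_\rho:[0,\rho]\to[0,\infty)$ be continuous with $K(s,\theta)=(s/\theta)^{N-1}\omega_\rho(s)$. Suppose the quantity $A(\alpha)=\int_\alpha^\rho\left(\int_0^\alpha K(s,\theta)ds\right)^{1/(p-1)}d\theta$ is positive for some $\alpha\in(0,\rho)$. Define $k_1(B_\rho)=\left[\int_0^\rho\left(\int_0^\theta K(s,\theta)ds\right)^{1/(p-1)}d\theta\right]^{-(p-1)}$ and $k_2(B_\rho)=\left[\max_{0\le\alpha\le\rho}A(\alpha)\right]^{-(p-1)}$. Then $k_1(B_\rho)<k_2(B_\rho)$. -/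
/-!
With `F a = ∫₀^a s^(N-1) ω(s) ds` the inner integral is `F a / θ^(N-1)`, so `A α` is the integral
over `[α, ρ]` of `(F α / θ^(N-1))^(1/(p-1))`, while the integral `I` defining `k₁` has the
nondecreasing `F θ` in place of `F α`; hence `A α ≤ I`. To get a strict inequality for the
supremum we prove a uniform gap. Pick `σ < τ < α₀` with `F σ = F α₀ / 2` and `F τ = 3 F α₀ / 4`.
If `α ≥ τ`, then `A α` misses the part of `I` over `[σ, τ]`, which is positive; if `α ≤ τ`, then
the numerator `F α ≤ F τ < F α₀` loses a fixed positive amount on `[α₀, ρ]`.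
-/

open Set MeasureTheory intervalIntegral

section Monotone

variable {r q c d θ : ℝ}

lemma div_rpow_rpow_le_of_le (hc : 0 ≤ c) (hcd : c ≤ d) (hθ : 0 ≤ θ) (hq : 0 ≤ q) :
    (c / θ ^ r) ^ q ≤ (d / θ ^ r) ^ q :=
  Real.rpow_le_rpow (div_nonneg hc (Real.rpow_nonneg hθ r))
    (div_le_div_of_nonneg_right hcd (Real.rpow_nonneg hθ r)) hq

lemma div_rpow_rpow_lt_of_lt (hc : 0 ≤ c) (hcd : c < d) (hθ : 0 < θ) (hq : 0 < q) :
    (c / θ ^ r) ^ q < (d / θ ^ r) ^ q :=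
  Real.rpow_lt_rpow (div_nonneg hc (Real.rpow_nonneg hθ.le r))
    (div_lt_div_of_pos_right hcd (Real.rpow_pos_of_pos hθ r)) hq

end Monotone

section Gap

variable {F : ℝ → ℝ} {ρ r q : ℝ}

lemma nonneg_of_monotoneOn_Icc (hFm : MonotoneOn F (Icc 0 ρ)) (hF0 : F 0 = 0) {a : ℝ}
    (ha : a ∈ Icc 0 ρ) : 0 ≤ F a :=
  hF0 ▸ hFm ⟨le_rfl, ha.1.trans ha.2⟩ ha ha.1

lemma div_rpow_rpow_diag_nonneg (hFm : MonotoneOn F (Icc 0 ρ)) (hF0 : F 0 = 0) {θ : ℝ}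
    (hθ : θ ∈ Icc 0 ρ) : 0 ≤ (F θ / θ ^ r) ^ q :=
  Real.rpow_nonneg (div_nonneg (nonneg_of_monotoneOn_Icc hFm hF0 hθ) (Real.rpow_nonneg hθ.1 r)) q

lemma div_rpow_rpow_le_of_monotoneOn (hFm : MonotoneOn F (Icc 0 ρ)) (hF0 : F 0 = 0) (hq : 0 ≤ q)
    {a b θ : ℝ} (ha : a ∈ Icc 0 ρ) (hb : b ∈ Icc 0 ρ) (hab : a ≤ b) (hθ : 0 ≤ θ) :
    (F a / θ ^ r) ^ q ≤ (F b / θ ^ r) ^ q :=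
  div_rpow_rpow_le_of_le (nonneg_of_monotoneOn_Icc hFm hF0 ha) (hFm ha hb hab) hθ hq

lemma intervalIntegrable_div_rpow_rpow_diag (hFc : ContinuousOn F (Icc 0 ρ))
    (hFm : MonotoneOn F (Icc 0 ρ)) (hF0 : F 0 = 0) (hρ : 0 ≤ ρ) (hq : 0 ≤ q) {C : ℝ}
    (hC : ∀ θ ∈ Ioc 0 ρ, F θ / θ ^ r ≤ C) :
    IntervalIntegrable (fun θ => (F θ / θ ^ r) ^ q) volume 0 ρ := by
  have hcont : ContinuousOn (fun θ => (F θ / θ ^ r) ^ q) (Ioc 0 ρ) :=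
    ((hFc.mono Ioc_subset_Icc_self).div (continuousOn_id.rpow_const fun θ hθ => Or.inl hθ.1.ne')
      fun θ hθ => (Real.rpow_pos_of_pos hθ.1 r).ne').rpow_const fun _ _ => Or.inr hq
  rw [intervalIntegrable_iff_integrableOn_Ioc_of_le hρ]
  refine IntegrableOn.of_bound measure_Ioc_lt_top
    (hcont.aestronglyMeasurable measurableSet_Ioc) (C ^ q) ?_
  refine ae_restrict_of_forall_mem measurableSet_Ioc fun θ hθ => ?_
  have h0 : 0 ≤ F θ / θ ^ r :=
    div_nonneg (nonneg_of_monotoneOn_Icc hFm hF0 (Ioc_subset_Icc_self hθ))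
      (Real.rpow_nonneg hθ.1.le r)
  rw [Real.norm_of_nonneg (Real.rpow_nonneg h0 q)]
  exact Real.rpow_le_rpow h0 (hC θ hθ) hq

lemma intervalIntegrable_div_rpow_rpow
    (hI : IntervalIntegrable (fun θ => (F θ / θ ^ r) ^ q) volume 0 ρ)
    (hFm : MonotoneOn F (Icc 0 ρ)) (hF0 : F 0 = 0) (hq : 0 ≤ q) {a : ℝ} (ha : a ∈ Icc 0 ρ) :
    IntervalIntegrable (fun θ => (F a / θ ^ r) ^ q) volume a ρ := by
  refine (hI.mono_set (uIcc_subset_uIcc_right (Icc_subset_uIcc ha))).mono_fun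
    ((measurable_const.div (measurable_id.pow_const r)).pow_const q).aestronglyMeasurable ?_
  refine ae_restrict_of_forall_mem measurableSet_uIoc fun θ hθ => ?_
  rw [uIoc_of_le ha.2] at hθ
  have hθ0 : 0 ≤ θ := ha.1.trans hθ.1.le
  have hle := div_rpow_rpow_le_of_monotoneOn (r := r) hFm hF0 hq ha ⟨hθ0, hθ.2⟩ hθ.1.le hθ0
  have h0 : 0 ≤ (F a / θ ^ r) ^ q := Real.rpow_nonneg
    (div_nonneg (nonneg_of_monotoneOn_Icc hFm hF0 ha) (Real.rpow_nonneg hθ0 r)) q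
  simp only [Real.norm_eq_abs]
  exact abs_le_abs hle (by linarith)

lemma integral_add_integral_le_integral_diag
    (hI : IntervalIntegrable (fun θ => (F θ / θ ^ r) ^ q) volume 0 ρ)
    (hFm : MonotoneOn F (Icc 0 ρ)) (hF0 : F 0 = 0) (hq : 0 ≤ q) {σ τ α : ℝ} (hσ : 0 ≤ σ)
    (hστ : σ ≤ τ) (hτα : τ ≤ α) (hαρ : α ≤ ρ) :
    (∫ θ in α..ρ, (F α / θ ^ r) ^ q) + ∫ θ in σ..τ, (F σ / θ ^ r) ^ q ≤
      ∫ θ in 0..ρ, (F θ / θ ^ r) ^ q := by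
  have hα : α ∈ Icc 0 ρ := ⟨hσ.trans (hστ.trans hτα), hαρ⟩
  have hσ' : σ ∈ Icc 0 ρ := ⟨hσ, hστ.trans (hτα.trans hαρ)⟩
  have hIα : IntervalIntegrable (fun θ => (F θ / θ ^ r) ^ q) volume 0 α :=
    hI.mono_set (uIcc_subset_uIcc_left (Icc_subset_uIcc hα))
  have h₁ : ∫ θ in α..ρ, (F α / θ ^ r) ^ q ≤ ∫ θ in α..ρ, (F θ / θ ^ r) ^ q :=
    integral_mono_on hαρ (intervalIntegrable_div_rpow_rpow hI hFm hF0 hq hα)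
      (hI.mono_set (uIcc_subset_uIcc_right (Icc_subset_uIcc hα)))
      fun θ hθ => div_rpow_rpow_le_of_monotoneOn hFm hF0 hq hα ⟨hα.1.trans hθ.1, hθ.2⟩ hθ.1
        (hα.1.trans hθ.1)
  have h₂ : ∫ θ in σ..τ, (F σ / θ ^ r) ^ q ≤ ∫ θ in σ..τ, (F θ / θ ^ r) ^ q :=
    integral_mono_on hστ ((intervalIntegrable_div_rpow_rpow hI hFm hF0 hq hσ').mono_set
        (uIcc_subset_uIcc_left (Icc_subset_uIcc ⟨hστ, hτα.trans hαρ⟩)))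
      (hIα.mono_set (uIcc_subset_uIcc (Icc_subset_uIcc ⟨hσ, hστ.trans hτα⟩)
        (Icc_subset_uIcc ⟨hσ.trans hστ, hτα⟩)))
      fun θ hθ => div_rpow_rpow_le_of_monotoneOn hFm hF0 hq hσ'
        ⟨hσ.trans hθ.1, hθ.2.trans (hτα.trans hαρ)⟩ hθ.1 (hσ.trans hθ.1)
  have h₃ : ∫ θ in σ..τ, (F θ / θ ^ r) ^ q ≤ ∫ θ in 0..α, (F θ / θ ^ r) ^ q :=
    integral_mono_interval hσ hστ hτα (ae_restrict_of_forall_mem measurableSet_Ioc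
      fun θ hθ => div_rpow_rpow_diag_nonneg hFm hF0 ⟨hθ.1.le, hθ.2.trans hαρ⟩) hIα
  have h₄ := integral_add_adjacent_intervals hIα
    (hI.mono_set (uIcc_subset_uIcc_right (Icc_subset_uIcc hα)))
  linarith

lemma integral_add_integral_sub_le_integral_diag
    (hI : IntervalIntegrable (fun θ => (F θ / θ ^ r) ^ q) volume 0 ρ)
    (hFm : MonotoneOn F (Icc 0 ρ)) (hF0 : F 0 = 0) (hq : 0 ≤ q) {α τ α₀ : ℝ} (hα : 0 ≤ α)
    (hατ : α ≤ τ) (hτα₀ : τ ≤ α₀) (hα₀ρ : α₀ ≤ ρ) :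
    (∫ θ in α..ρ, (F α / θ ^ r) ^ q) + ∫ θ in α₀..ρ, ((F α₀ / θ ^ r) ^ q - (F τ / θ ^ r) ^ q) ≤
      ∫ θ in 0..ρ, (F θ / θ ^ r) ^ q := by
  have hα' : α ∈ Icc 0 ρ := ⟨hα, hατ.trans (hτα₀.trans hα₀ρ)⟩
  have hτ' : τ ∈ Icc 0 ρ := ⟨hα.trans hατ, hτα₀.trans hα₀ρ⟩
  have hα₀' : α₀ ∈ Icc 0 ρ := ⟨hτ'.1.trans hτα₀, hα₀ρ⟩
  have hIα : IntervalIntegrable (fun θ => (F θ / θ ^ r) ^ q) volume α ρ :=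
    hI.mono_set (uIcc_subset_uIcc_right (Icc_subset_uIcc hα'))
  have hD : IntervalIntegrable (fun θ => (F θ / θ ^ r) ^ q - (F α / θ ^ r) ^ q) volume α ρ :=
    hIα.sub (intervalIntegrable_div_rpow_rpow hI hFm hF0 hq hα')
  have hGτ := (intervalIntegrable_div_rpow_rpow hI hFm hF0 hq hτ').mono_set
    (uIcc_subset_uIcc_right (Icc_subset_uIcc ⟨hτα₀, hα₀ρ⟩))
  have h₁ : ∫ θ in α₀..ρ, ((F α₀ / θ ^ r) ^ q - (F τ / θ ^ r) ^ q) ≤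
      ∫ θ in α₀..ρ, ((F θ / θ ^ r) ^ q - (F α / θ ^ r) ^ q) :=
    integral_mono_on hα₀ρ ((intervalIntegrable_div_rpow_rpow hI hFm hF0 hq hα₀').sub hGτ)
      (hD.mono_set (uIcc_subset_uIcc_right (Icc_subset_uIcc ⟨hατ.trans hτα₀, hα₀ρ⟩)))
      fun θ hθ => sub_le_sub
        (div_rpow_rpow_le_of_monotoneOn hFm hF0 hq hα₀' ⟨hα₀'.1.trans hθ.1, hθ.2⟩ hθ.1
          (hα₀'.1.trans hθ.1))
        (div_rpow_rpow_le_of_monotoneOn hFm hF0 hq hα' hτ' hατ (hα₀'.1.trans hθ.1))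
  have h₂ : ∫ θ in α₀..ρ, ((F θ / θ ^ r) ^ q - (F α / θ ^ r) ^ q) ≤
      ∫ θ in α..ρ, ((F θ / θ ^ r) ^ q - (F α / θ ^ r) ^ q) :=
    integral_mono_interval (hατ.trans hτα₀) hα₀ρ le_rfl (ae_restrict_of_forall_mem measurableSet_Ioc
      fun θ hθ => sub_nonneg.2 (div_rpow_rpow_le_of_monotoneOn hFm hF0 hq hα'
        ⟨hα.trans hθ.1.le, hθ.2⟩ hθ.1.le (hα.trans hθ.1.le))) hD
  have h₃ := integral_sub hIα (intervalIntegrable_div_rpow_rpow hI hFm hF0 hq hα')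
  have h₄ : 0 ≤ ∫ θ in 0..α, (F θ / θ ^ r) ^ q :=
    integral_nonneg hα fun θ hθ => div_rpow_rpow_diag_nonneg hFm hF0 ⟨hθ.1, hθ.2.trans hα'.2⟩
  have h₅ := integral_add_adjacent_intervals
    (hI.mono_set (uIcc_subset_uIcc_left (Icc_subset_uIcc hα'))) hIα
  linarith

theorem exists_lt_integral_diag_forall_integral_le (hFc : ContinuousOn F (Icc 0 ρ))
    (hI : IntervalIntegrable (fun θ => (F θ / θ ^ r) ^ q) volume 0 ρ)
    (hFm : MonotoneOn F (Icc 0 ρ)) (hF0 : F 0 = 0) (hq : 0 < q) {α₀ : ℝ} (hα₀ : α₀ ∈ Ioo 0 ρ)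
    (hFα₀ : 0 < F α₀) :
    ∃ M < ∫ θ in 0..ρ, (F θ / θ ^ r) ^ q,
      ∀ α ∈ Icc 0 ρ, ∫ θ in α..ρ, (F α / θ ^ r) ^ q ≤ M := by
  have hIVT := intermediate_value_Icc hα₀.1.le (hFc.mono (Icc_subset_Icc_right hα₀.2.le))
  obtain ⟨σ, hσ, hFσ⟩ := hIVT ⟨(hF0.trans_le (by linarith) : F 0 ≤ F α₀ / 2), by linarith⟩
  obtain ⟨τ, hτ, hFτ⟩ := hIVT ⟨(hF0.trans_le (by linarith) : F 0 ≤ 3 / 4 * F α₀), by linarith⟩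
  have hα₀' : α₀ ∈ Icc 0 ρ := Ioo_subset_Icc_self hα₀
  have hσ' : σ ∈ Icc 0 ρ := ⟨hσ.1, hσ.2.trans hα₀'.2⟩
  have hτ' : τ ∈ Icc 0 ρ := ⟨hτ.1, hτ.2.trans hα₀'.2⟩
  have hστ : σ < τ := hFm.reflect_lt hσ' hτ' (by linarith)
  have hδ₁ : 0 < ∫ θ in σ..τ, (F σ / θ ^ r) ^ q :=
    intervalIntegral_pos_of_pos_on ((intervalIntegrable_div_rpow_rpow hI hFm hF0 hq.le hσ').mono_set
        (uIcc_subset_uIcc_left (Icc_subset_uIcc ⟨hστ.le, hτ'.2⟩)))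
      (fun θ hθ => Real.rpow_pos_of_pos
        (div_pos (by linarith) (Real.rpow_pos_of_pos (hσ.1.trans_lt hθ.1) r)) q) hστ
  have hδ₂ : 0 < ∫ θ in α₀..ρ, ((F α₀ / θ ^ r) ^ q - (F τ / θ ^ r) ^ q) :=
    intervalIntegral_pos_of_pos_on ((intervalIntegrable_div_rpow_rpow hI hFm hF0 hq.le hα₀').sub
        ((intervalIntegrable_div_rpow_rpow hI hFm hF0 hq.le hτ').mono_set
          (uIcc_subset_uIcc_right (Icc_subset_uIcc ⟨hτ.2, hα₀'.2⟩))))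
      (fun θ hθ => sub_pos.2 (div_rpow_rpow_lt_of_lt (by linarith) (by linarith)
        (hα₀.1.trans hθ.1) hq)) hα₀.2
  refine ⟨_, sub_lt_self _ (lt_min hδ₁ hδ₂), fun α hα => ?_⟩
  rcases le_total τ α with hτα | hατ
  · have := integral_add_integral_le_integral_diag hI hFm hF0 hq.le hσ.1 hστ.le hτα hα.2
    linarith [min_le_left (∫ θ in σ..τ, (F σ / θ ^ r) ^ q)
      (∫ θ in α₀..ρ, ((F α₀ / θ ^ r) ^ q - (F τ / θ ^ r) ^ q))]
  · have := integral_add_integral_sub_le_integral_diag hI hFm hF0 hq.le hα.1 hατ hτ.2 hα₀'.2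
    linarith [min_le_right (∫ θ in σ..τ, (F σ / θ ^ r) ^ q)
      (∫ θ in α₀..ρ, ((F α₀ / θ ^ r) ^ q - (F τ / θ ^ r) ^ q))]

end Gap

section Primitive

variable {f : ℝ → ℝ} {ρ : ℝ}

lemma continuousOn_primitive_Icc_zero (hf : ContinuousOn f (Icc 0 ρ)) (hρ : 0 ≤ ρ) :
    ContinuousOn (fun a => ∫ s in 0..a, f s) (Icc 0 ρ) := by
  rw [← uIcc_of_le hρ] at hf ⊢
  exact continuousOn_primitive_interval (hf.integrableOn_compact isCompact_uIcc)

lemma monotoneOn_primitive_of_nonneg (hf : ContinuousOn f (Icc 0 ρ))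
    (hnn : ∀ s ∈ Icc 0 ρ, 0 ≤ f s) : MonotoneOn (fun a => ∫ s in 0..a, f s) (Icc 0 ρ) :=
  fun _ ha _ hb hab => integral_mono_interval le_rfl ha.1 hab
    (ae_restrict_of_forall_mem measurableSet_Ioc fun s hs => hnn s ⟨hs.1.le, hs.2.trans hb.2⟩)
    ((hf.mono (Icc_subset_Icc_right hb.2)).intervalIntegrable_of_Icc hb.1)

end Primitive

section Kernel

variable {ω : ℝ → ℝ} {r : ℝ}

lemma integral_div_rpow_mul_eq {a θ : ℝ} (ha : 0 ≤ a) (hθ : 0 ≤ θ) :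
    ∫ s in 0..a, (s / θ) ^ r * ω s = (∫ s in 0..a, s ^ r * ω s) / θ ^ r := by
  rw [← intervalIntegral.integral_div]
  refine integral_congr fun s hs => ?_
  rw [uIcc_of_le ha] at hs
  simp only [Real.div_rpow hs.1 hθ, div_mul_eq_mul_div]

lemma integral_rpow_mul_div_rpow_le {ρ C θ : ℝ} (hr : 0 ≤ r) (hω : ContinuousOn ω (Icc 0 ρ))
    (hωnn : ∀ s ∈ Icc 0 ρ, 0 ≤ ω s) (hC : ∀ s ∈ Icc 0 ρ, ω s ≤ C) (hθ : θ ∈ Ioc 0 ρ) :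
    (∫ s in 0..θ, s ^ r * ω s) / θ ^ r ≤ ρ * C := by
  have hθr : 0 < θ ^ r := Real.rpow_pos_of_pos hθ.1 r
  have hC0 : 0 ≤ C := (hωnn θ (Ioc_subset_Icc_self hθ)).trans (hC θ (Ioc_subset_Icc_self hθ))
  have hint : ∫ s in 0..θ, s ^ r * ω s ≤ ∫ _ in 0..θ, θ ^ r * C :=
    integral_mono_on hθ.1.le
      ((((Real.continuous_rpow_const hr).continuousOn.mul hω).mono
        (Icc_subset_Icc_right hθ.2)).intervalIntegrable_of_Icc hθ.1.le)
      intervalIntegrable_const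
      fun s hs => mul_le_mul (Real.rpow_le_rpow hs.1 hs.2 hr) (hC s ⟨hs.1, hs.2.trans hθ.2⟩)
        (hωnn s ⟨hs.1, hs.2.trans hθ.2⟩) hθr.le
  rw [intervalIntegral.integral_const, smul_eq_mul, sub_zero] at hint
  rw [div_le_iff₀ hθr]
  nlinarith [mul_le_mul_of_nonneg_right hθ.2 (mul_nonneg hθr.le hC0)]

lemma integral_rpow_integral_div_rpow_mul_eq {g : ℝ → ℝ} {a b q : ℝ} (ha : 0 ≤ a) (hab : a ≤ b)
    (hg : ∀ θ ∈ Icc a b, 0 ≤ g θ) :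
    ∫ θ in a..b, (∫ s in 0..g θ, (s / θ) ^ r * ω s) ^ q =
      ∫ θ in a..b, ((∫ s in 0..g θ, s ^ r * ω s) / θ ^ r) ^ q :=
  integral_congr fun θ hθ => by
    rw [uIcc_of_le hab] at hθ
    simp only [integral_div_rpow_mul_eq (hg θ hθ) (ha.trans hθ.1)]

end Kernel

lemma rpow_lt_ciSup_rpow {s : Set ℝ} {f : ℝ → ℝ} {M I e x₀ : ℝ} (hM : ∀ x ∈ s, f x ≤ M)
    (hMI : M < I) (hx₀ : x₀ ∈ s) (hfx₀ : 0 < f x₀) (he : e < 0) :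
    I ^ e < (⨆ x : s, f x) ^ e := by
  have : Nonempty s := ⟨⟨x₀, hx₀⟩⟩
  have hM' : ∀ x : s, f x ≤ M := fun x => hM x x.2
  exact Real.rpow_lt_rpow_of_neg (hfx₀.trans_le (le_ciSup ⟨M, forall_mem_range.2 hM'⟩ ⟨x₀, hx₀⟩))
    ((ciSup_le hM').trans_lt hMI) he

theorem stmt_12 (N : ℕ) (hN : 1 < N) (p ρ : ℝ) (hp : 1 < p) (hρ : 0 < ρ)
    (ω : ℝ → ℝ) (hω : ContinuousOn ω (Set.Icc 0 ρ)) (hωnn : ∀ s ∈ Set.Icc (0 : ℝ) ρ, 0 ≤ ω s)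
    (K : ℝ → ℝ → ℝ) (hK : ∀ s θ : ℝ, K s θ = (s / θ) ^ ((N : ℝ) - 1) * ω s)
    (A : ℝ → ℝ)
    (hA : ∀ α : ℝ, A α = ∫ θ in α..ρ, (∫ s in (0 : ℝ)..α, K s θ) ^ (1 / (p - 1)))
    (hApos : ∃ α ∈ Set.Ioo (0 : ℝ) ρ, 0 < A α)
    (k₁ k₂ : ℝ)
    (hk₁ : k₁ = (∫ θ in (0 : ℝ)..ρ, (∫ s in (0 : ℝ)..θ, K s θ) ^ (1 / (p - 1))) ^ (-(p - 1)))
    (hk₂ : k₂ = (⨆ α : Set.Icc (0 : ℝ) ρ, A α) ^ (-(p - 1))) :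
    k₁ < k₂ := by
  obtain ⟨α₀, hα₀, hAα₀⟩ := hApos
  have hr : (0 : ℝ) ≤ N - 1 := sub_nonneg.2 (by exact_mod_cast hN.le)
  have hq : 0 < 1 / (p - 1) := one_div_pos.2 (sub_pos.2 hp)
  simp only [hK] at hA hk₁
  set F : ℝ → ℝ := fun a => ∫ s in 0..a, s ^ ((N : ℝ) - 1) * ω s
  have hf : ContinuousOn (fun s => s ^ ((N : ℝ) - 1) * ω s) (Icc 0 ρ) :=
    (Real.continuous_rpow_const hr).continuousOn.mul hω
  have hFc := continuousOn_primitive_Icc_zero hf hρ.le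
  have hFm : MonotoneOn F (Icc 0 ρ) := monotoneOn_primitive_of_nonneg hf
    fun s hs => mul_nonneg (Real.rpow_nonneg hs.1 _) (hωnn s hs)
  have hAF : ∀ α ∈ Icc 0 ρ, A α = ∫ θ in α..ρ, (F α / θ ^ ((N : ℝ) - 1)) ^ (1 / (p - 1)) :=
    fun α hα => (hA α).trans (integral_rpow_integral_div_rpow_mul_eq hα.1 hα.2 fun _ _ => hα.1)
  have hFα₀ : 0 < F α₀ := by
    refine (nonneg_of_monotoneOn_Icc hFm integral_same (Ioo_subset_Icc_self hα₀)).lt_of_ne' ?_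
    intro h
    simp only [hAF α₀ (Ioo_subset_Icc_self hα₀), h, zero_div, Real.zero_rpow hq.ne',
      intervalIntegral.integral_zero, lt_irrefl] at hAα₀
  obtain ⟨C, hC⟩ := isCompact_Icc.bddAbove_image hω
  have hI := intervalIntegrable_div_rpow_rpow_diag hFc hFm integral_same hρ.le hq.le
    fun θ hθ => integral_rpow_mul_div_rpow_le hr hω hωnn (fun s hs => hC (mem_image_of_mem ω hs)) hθ
  obtain ⟨M, hMI, hAM⟩ :=
    exists_lt_integral_diag_forall_integral_le hFc hI hFm integral_same hq hα₀ hFα₀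
  rw [hk₁, integral_rpow_integral_div_rpow_mul_eq le_rfl hρ.le fun θ hθ => hθ.1, hk₂]
  exact rpow_lt_ciSup_rpow (fun α hα => (hAF α hα).trans_le (hAM α hα)) hMI
    (Ioo_subset_Icc_self hα₀) hAα₀ (by linarith)
end
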